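/- Assume q ≥ c_q for some constant c_q > 0. For any 0 ≤ t < T₀ ≤ T and μ ∈ 𝒫₀(𝕊), the set value satisfies the dynamic programming principle: V_state(t,μ) = ∩_{ε>0} { φ: 𝕊 → ℝ : ‖φ − J(T₀,ψ;t,μ,α*;·,α*)‖_∞ ≤ ε for some ψ: 𝕊×𝒫₀(𝕊) → ℝ and α* ∈ 𝒜_state such that ψ(·,μ^{α*}_{T₀}) ∈ V^ε_state(T₀,μ^{α*}_{T₀}) and α* ∈ ℳ^ε_state(T₀,ψ;t,μ) }. -/

import Mathlib

/-!
Against a fixed population flow `ν` the representative player faces an ordinary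
finite-horizon control problem, and the cost of `γ ⊕_{T₀} γ'` from time `t` equals the cost of
`γ` in the game truncated at `T₀` with terminal cost `J(ν; T₀, ·, γ')`.

`⊇`: glue an `ε`-equilibrium `α'` of the game from `(T₀, μ^α_{T₀})` after an `ε`-equilibrium `α`
of the truncated game whose terminal cost is `ε`-close to the values of `α'`; the population
flow of `α ⊕_{T₀} α'` is `μ^α` up to `T₀` and `μ^{α'}` afterwards, and the errors add up to `4ε`.

`⊆`: for a `δ`-equilibrium `α` take `ψ := J(μ^α; T₀, ·, α)`. The only nontrivial point is that
`α` is still nearly optimal from time `T₀` on. Backward induction gives a control `αu` that is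
`δ`-optimal from every state at `T₀` simultaneously; since `q ≥ c_q`, every state is reached at
time `T₀` with probability at least `c_q`, so deviating to `α ⊕_{T₀} αu` at time `t` shows that
`α` is `(δ + 2δ / c_q)`-optimal from every state at `T₀`.
-/

open Finset

namespace MFGSetValue

variable {S A : Type*} [Fintype S] [DecidableEq S]

/-- A probability vector on the finite state space `S`. -/
def IsProb (μ : S → ℝ) : Prop := (∀ x, 0 ≤ μ x) ∧ ∑ x, μ x = 1

/-- The measure flow `μ^α` determined by `ℙ^{t,μ,α}`:
`μ^α_t = μ` and `μ^α_{s+1}(y) = ∑_x μ^α_s(x) q(s,x,μ^α_s,α(s,x);y)`.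
(For `s < t` the value is irrelevant; we set it to `μ`.) -/
noncomputable def flow (q : ℕ → S → (S → ℝ) → A → S → ℝ) (α : ℕ → S → A)
    (t : ℕ) (μ : S → ℝ) : ℕ → S → ℝ
  | 0 => μ
  | s + 1 =>
    if s + 1 ≤ t then μ
    else fun y => ∑ x, flow q α t μ s x * q s x (flow q α t μ s) (α s x) y

/-- The law at each time of the Markov chain `ℙ^{{ν_·}; t, x₀, α̃}` started from `x₀`
at time `t`, moving with transitions `q(s, ·, ν_s, α̃(s,·); ·)`. -/
noncomputable def chain (q : ℕ → S → (S → ℝ) → A → S → ℝ) (ν : ℕ → S → ℝ)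
    (αt : ℕ → S → A) (t : ℕ) (x₀ : S) : ℕ → S → ℝ
  | 0 => fun x => if x = x₀ then 1 else 0
  | s + 1 =>
    if s + 1 ≤ t then fun x => if x = x₀ then 1 else 0
    else fun y => ∑ x, chain q ν αt t x₀ s x * q s x (ν s) (αt s x) y

/-- The cost `J(T₀, ψ; {ν_·}; t, x₀, α̃)` with horizon `T₀`, terminal reward `ψ(X_{T₀}, ν_{T₀})`,
running cost `F`, against the measure flow `ν`:
`E[ψ(X_{T₀}, ν_{T₀}) + ∑_{s=t}^{T₀-1} F(s, X_s, ν_s, α̃(s,X_s))]`. -/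
noncomputable def cost (q : ℕ → S → (S → ℝ) → A → S → ℝ)
    (F : ℕ → S → (S → ℝ) → A → ℝ) (T₀ : ℕ) (ψ : S → (S → ℝ) → ℝ)
    (ν : ℕ → S → ℝ) (t : ℕ) (x₀ : S) (αt : ℕ → S → A) : ℝ :=
  (∑ x, chain q ν αt t x₀ T₀ x * ψ x (ν T₀)) +
    ∑ s ∈ Finset.Ico t T₀, ∑ x, chain q ν αt t x₀ s x * F s x (ν s) (αt s x)

/-- The value `v(T₀,ψ; {ν_·}; t, x₀) = inf_{α̃ ∈ 𝒜_state} J(T₀,ψ;{ν_·};t,x₀,α̃)`. -/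
noncomputable def value (q : ℕ → S → (S → ℝ) → A → S → ℝ)
    (F : ℕ → S → (S → ℝ) → A → ℝ) (T₀ : ℕ) (ψ : S → (S → ℝ) → ℝ)
    (ν : ℕ → S → ℝ) (t : ℕ) (x₀ : S) : ℝ :=
  sInf { r : ℝ | ∃ αt : ℕ → S → A, r = cost q F T₀ ψ ν t x₀ αt }

/-- `α ∈ ℳ_state(T₀, ψ; t, μ)`: a state-dependent MFE for the game on `{t,…,T₀}` with
terminal cost `ψ`.  (Taking `T₀ = T`, `ψ = G` gives `ℳ_state(t,μ)`.) -/
def isMFE (q : ℕ → S → (S → ℝ) → A → S → ℝ) (F : ℕ → S → (S → ℝ) → A → ℝ)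
    (T₀ : ℕ) (ψ : S → (S → ℝ) → ℝ) (t : ℕ) (μ : S → ℝ) (α : ℕ → S → A) : Prop :=
  ∀ x, cost q F T₀ ψ (flow q α t μ) t x α = value q F T₀ ψ (flow q α t μ) t x

/-- Concatenation `α ⊕_{T₀} α'`. -/
def concat (T₀ : ℕ) (α α' : ℕ → S → A) : ℕ → S → A :=
  fun s x => if s < T₀ then α s x else α' s x

end MFGSetValue

open MFGSetValue

namespace MFGSetValue

variable {S A : Type*} [Fintype S] [DecidableEq S]

/-- `α ∈ ℳ^ε_state(T₀, ψ; t, μ)`: a state-dependent `ε`-MFE for the game on `{t,…,T₀}`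
with terminal cost `ψ`:  `J(T₀,ψ;t,μ,α;x,α) ≤ inf_{α̃} J(T₀,ψ;t,μ,α;x,α̃) + ε` for all `x`.
(Taking `T₀ = T`, `ψ = G` gives `ℳ^ε_state(t,μ)`.) -/
def isMFEeps (q : ℕ → S → (S → ℝ) → A → S → ℝ) (F : ℕ → S → (S → ℝ) → A → ℝ)
    (T₀ : ℕ) (ψ : S → (S → ℝ) → ℝ) (ε : ℝ) (t : ℕ) (μ : S → ℝ) (α : ℕ → S → A) : Prop :=
  ∀ x, cost q F T₀ ψ (flow q α t μ) t x α ≤ value q F T₀ ψ (flow q α t μ) t x + ε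

/-- `𝕍^ε_state(t,μ)`: the set of `φ : 𝕊 → ℝ` with `‖φ - J(t,μ,α*;·,α*)‖_∞ ≤ ε`
for some `α* ∈ ℳ^ε_state(t,μ)`. -/
noncomputable def setValueEps (q : ℕ → S → (S → ℝ) → A → S → ℝ)
    (F : ℕ → S → (S → ℝ) → A → ℝ) (G : S → (S → ℝ) → ℝ)
    (T : ℕ) (ε : ℝ) (t : ℕ) (μ : S → ℝ) : Set (S → ℝ) :=
  { φ | ∃ α : ℕ → S → A, isMFEeps q F T G ε t μ α ∧
      ∀ x, |φ x - cost q F T G (flow q α t μ) t x α| ≤ ε }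

/-- The set value `𝕍_state(t,μ) := ⋂_{ε>0} 𝕍^ε_state(t,μ)`. -/
noncomputable def setValue (q : ℕ → S → (S → ℝ) → A → S → ℝ)
    (F : ℕ → S → (S → ℝ) → A → ℝ) (G : S → (S → ℝ) → ℝ)
    (T : ℕ) (t : ℕ) (μ : S → ℝ) : Set (S → ℝ) :=
  ⋂ (ε : ℝ) (_ : 0 < ε), setValueEps q F G T ε t μ

end MFGSetValue

namespace MFGSetValue

variable {S A : Type*}

theorem concat_of_lt {α α' : ℕ → S → A} {s T₀ : ℕ} (h : s < T₀) : concat T₀ α α' s = α s :=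
  funext fun _ => if_pos h

theorem concat_of_le {α α' : ℕ → S → A} {s T₀ : ℕ} (h : T₀ ≤ s) : concat T₀ α α' s = α' s :=
  funext fun _ => if_neg (not_lt.2 h)

theorem concat_self (T₀ : ℕ) (α : ℕ → S → A) : concat T₀ α α = α := by
  funext s x
  exact ite_self _

variable [Fintype S]

theorem IsProb.sum_mul {p : S → ℝ} {k : S → S → ℝ} (hp : IsProb p) (hk : ∀ x, IsProb (k x)) :
    IsProb fun y => ∑ x, p x * k x y := by
  refine ⟨fun y => Finset.sum_nonneg fun x _ => mul_nonneg (hp.1 x) ((hk x).1 y), ?_⟩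
  rw [Finset.sum_comm]
  simp only [← Finset.mul_sum, fun x => (hk x).2, mul_one, hp.2]

theorem IsProb.sum_mul_le_sum_mul_add {p f g : S → ℝ} {c : ℝ} (hp : IsProb p)
    (h : ∀ y, f y ≤ g y + c) : ∑ y, p y * f y ≤ ∑ y, p y * g y + c :=
  calc ∑ y, p y * f y ≤ ∑ y, p y * (g y + c) :=
        Finset.sum_le_sum fun y _ => mul_le_mul_of_nonneg_left (h y) (hp.1 y)
    _ = ∑ y, p y * g y + c := by
        simp only [mul_add, Finset.sum_add_distrib, ← Finset.sum_mul, hp.2, one_mul]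

theorem IsProb.le_sum_mul {p w : S → ℝ} {c : ℝ} (hp : IsProb p) (h : ∀ y, c ≤ w y) :
    c ≤ ∑ y, p y * w y :=
  calc c = ∑ y, p y * c := by rw [← Finset.sum_mul, hp.2, one_mul]
    _ ≤ ∑ y, p y * w y := Finset.sum_le_sum fun y _ => mul_le_mul_of_nonneg_left (h y) (hp.1 y)

theorem IsProb.mul_le_sum_mul_add {p d : S → ℝ} {η : ℝ} (hp : IsProb p) (hη : 0 ≤ η)
    (hd : ∀ y, -η ≤ d y) (y₀ : S) : p y₀ * d y₀ ≤ ∑ y, p y * d y + η :=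
  calc p y₀ * d y₀ ≤ p y₀ * (d y₀ + η) := by nlinarith [hp.1 y₀]
    _ ≤ ∑ y, p y * (d y + η) :=
        Finset.single_le_sum (f := fun y => p y * (d y + η))
          (fun y _ => mul_nonneg (hp.1 y) (by linarith [hd y])) (Finset.mem_univ y₀)
    _ = ∑ y, p y * d y + η := by
        simp only [mul_add, Finset.sum_add_distrib, ← Finset.sum_mul, hp.2, one_mul]

theorem exists_forall_le_add_of_bddBelow {ι : Type*} [Nonempty ι] {f : ι → ℝ}
    (hf : BddBelow (Set.range f)) {η : ℝ} (hη : 0 < η) : ∃ i, ∀ j, f i ≤ f j + η := by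
  obtain ⟨i, hi⟩ := exists_lt_of_ciInf_lt (lt_add_of_pos_right (⨅ i, f i) hη)
  exact ⟨i, fun j => by linarith [ciInf_le hf j]⟩

variable {q : ℕ → S → (S → ℝ) → A → S → ℝ} {F : ℕ → S → (S → ℝ) → A → ℝ}
  {ν ν' : ℕ → S → ℝ} {α α' β γ γ' : ℕ → S → A} {μ : S → ℝ} {t s T₀ H : ℕ}
  {ψ ψ' : S → (S → ℝ) → ℝ}

theorem flow_of_le (h : s ≤ t) : flow q α t μ s = μ := by
  cases s with
  | zero => rfl
  | succ n => simp only [flow, if_pos h]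

theorem flow_succ_of_le (h : t ≤ s) :
    flow q α t μ (s + 1) = fun y => ∑ x, flow q α t μ s x * q s x (flow q α t μ s) (α s x) y := by
  simp only [flow, if_neg (by omega : ¬ s + 1 ≤ t)]

theorem flow_congr (hα : ∀ r, t ≤ r → r < s → α r = α' r) : flow q α t μ s = flow q α' t μ s := by
  induction s with
  | zero => rfl
  | succ n ih =>
    by_cases hn : n + 1 ≤ t
    · rw [flow_of_le hn, flow_of_le hn]
    · have ht : t ≤ n := by omega
      rw [flow_succ_of_le ht, flow_succ_of_le ht, ih (fun r h1 h2 => hα r h1 (by omega)),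
        hα n ht (by omega)]

theorem flow_restart (htT₀ : t ≤ T₀) (hα : ∀ r, T₀ ≤ r → α r = β r) (hs : T₀ ≤ s) :
    flow q α T₀ (flow q β t μ T₀) s = flow q β t μ s := by
  induction s, hs using Nat.le_induction with
  | base => exact flow_of_le le_rfl
  | succ n hn ih => rw [flow_succ_of_le hn, flow_succ_of_le (htT₀.trans hn), ih, hα n hn]

theorem flow_concat_of_le (h : s ≤ T₀) : flow q (concat T₀ α α') t μ s = flow q α t μ s :=
  flow_congr fun _ _ hr => concat_of_lt (by omega)

theorem flow_concat_of_ge (htT₀ : t ≤ T₀) (h : T₀ ≤ s) :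
    flow q (concat T₀ α α') t μ s = flow q α' T₀ (flow q α t μ T₀) s := by
  rw [← flow_restart htT₀ (fun r hr => (concat_of_le hr).symm) h, flow_concat_of_le le_rfl]

theorem isProb_flow (hq : ∀ s x μ a, IsProb μ → IsProb (q s x μ a)) (hμ : IsProb μ) (s : ℕ) :
    IsProb (flow q α t μ s) := by
  induction s with
  | zero => exact hμ
  | succ n ih =>
    by_cases hn : n + 1 ≤ t
    · rw [flow_of_le hn]; exact hμ
    · rw [flow_succ_of_le (by omega)]
      exact ih.sum_mul fun x => hq _ _ _ _ ih

theorem bddBelow_range_add_sum_mul (hq : ∀ s x μ a, IsProb μ → IsProb (q s x μ a))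
    (hF : ∀ s x (μ : S → ℝ), BddBelow (Set.range fun a : A => F s x μ a)) {m : S → ℝ}
    (hm : IsProb m) (s : ℕ) (x : S) (w : S → ℝ) :
    BddBelow (Set.range fun a => F s x m a + ∑ y, q s x m a y * w y) := by
  obtain ⟨b, hb⟩ := hF s x m
  obtain ⟨c, hc⟩ := (Set.finite_range w).bddBelow
  refine ⟨b + c, ?_⟩
  rintro _ ⟨a, rfl⟩
  exact add_le_add (hb ⟨a, rfl⟩) ((hq s x m a hm).le_sum_mul fun y => hc ⟨y, rfl⟩)

variable [DecidableEq S]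

theorem isProb_ite_eq (x₀ : S) : IsProb fun x => if x = x₀ then (1 : ℝ) else 0 :=
  ⟨fun x => by dsimp only; split_ifs <;> norm_num, by simp⟩

theorem chain_of_le (h : s ≤ t) (x₀ : S) :
    chain q ν α t x₀ s = fun x => if x = x₀ then 1 else 0 := by
  cases s with
  | zero => rfl
  | succ n => simp only [chain, if_pos h]

theorem chain_succ_of_le (h : t ≤ s) (x₀ : S) :
    chain q ν α t x₀ (s + 1) = fun y => ∑ x, chain q ν α t x₀ s x * q s x (ν s) (α s x) y := by
  simp only [chain, if_neg (by omega : ¬ s + 1 ≤ t)]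

theorem chain_congr (x₀ : S) (hν : ∀ r, t ≤ r → r < s → ν r = ν' r)
    (hα : ∀ r, t ≤ r → r < s → α r = α' r) : chain q ν α t x₀ s = chain q ν' α' t x₀ s := by
  induction s with
  | zero => rfl
  | succ n ih =>
    by_cases hn : n + 1 ≤ t
    · rw [chain_of_le hn, chain_of_le hn]
    · have ht : t ≤ n := by omega
      rw [chain_succ_of_le ht, chain_succ_of_le ht, hν n ht (by omega), hα n ht (by omega),
        ih (fun r h1 h2 => hν r h1 (by omega)) (fun r h1 h2 => hα r h1 (by omega))]

theorem isProb_chain (hq : ∀ s x μ a, IsProb μ → IsProb (q s x μ a)) (hν : ∀ r, IsProb (ν r))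
    (x₀ : S) (s : ℕ) : IsProb (chain q ν α t x₀ s) := by
  induction s with
  | zero => exact isProb_ite_eq x₀
  | succ n ih =>
    by_cases hn : n + 1 ≤ t
    · rw [chain_of_le hn]; exact isProb_ite_eq x₀
    · rw [chain_succ_of_le (by omega)]
      exact ih.sum_mul fun x => hq _ _ _ _ (hν n)

theorem le_chain_of_lt {cq : ℝ} (hq : ∀ s x μ a, IsProb μ → IsProb (q s x μ a))
    (hqlb : ∀ s x μ a y, IsProb μ → cq ≤ q s x μ a y) (hν : ∀ r, IsProb (ν r)) (hts : t < s)
    (x₀ y : S) : cq ≤ chain q ν α t x₀ s y := by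
  obtain ⟨n, rfl⟩ : ∃ n, s = n + 1 := ⟨s - 1, by omega⟩
  rw [chain_succ_of_le (by omega)]
  exact (isProb_chain hq hν x₀ n).le_sum_mul fun x => hqlb _ _ _ _ _ (hν n)

theorem chain_eq_sum_mul_chain_succ (hts : t < s) (x z : S) :
    chain q ν α t x s z = ∑ y, q t x (ν t) (α t x) y * chain q ν α (t + 1) y s z := by
  induction s, Nat.succ_le_of_lt hts using Nat.le_induction generalizing z with
  | base =>
    rw [chain_succ_of_le le_rfl]
    simp [chain_of_le le_rfl]
  | succ n hn ih =>
    have hn' : t + 1 ≤ n := hn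
    rw [chain_succ_of_le (by omega)]
    simp only [chain_succ_of_le hn', ih (by omega), Finset.sum_mul, Finset.mul_sum, mul_assoc]
    exact Finset.sum_comm

theorem cost_congr (x : S) (hν : ∀ r, t ≤ r → r ≤ H → ν r = ν' r)
    (hα : ∀ r, t ≤ r → r < H → α r = α' r) (hψ : ∀ z, ψ z (ν H) = ψ' z (ν' H)) :
    cost q F H ψ ν t x α = cost q F H ψ' ν' t x α' := by
  have hchain : ∀ s, s ≤ H → chain q ν α t x s = chain q ν' α' t x s := fun s hs =>
    chain_congr x (fun r h1 h2 => hν r h1 (by omega)) (fun r h1 h2 => hα r h1 (by omega))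
  unfold cost
  congr 1
  · simp only [hchain H le_rfl, hψ]
  · refine Finset.sum_congr rfl fun s hs => ?_
    obtain ⟨hts, hsH⟩ := Finset.mem_Ico.1 hs
    simp only [hchain s hsH.le, hν s hts hsH.le, hα s hts hsH]

theorem cost_self (x : S) : cost q F H ψ ν H x α = ψ x (ν H) := by
  simp [cost, chain_of_le le_rfl]

theorem cost_eq_add_sum_mul_cost_succ (x : S) (htH : t < H) :
    cost q F H ψ ν t x α =
      F t x (ν t) (α t x) + ∑ y, q t x (ν t) (α t x) y * cost q F H ψ ν (t + 1) y α := by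
  have hstep : ∀ s, t < s → ∀ f : S → ℝ, ∑ z, chain q ν α t x s z * f z =
      ∑ y, q t x (ν t) (α t x) y * ∑ z, chain q ν α (t + 1) y s z * f z := by
    intro s hts f
    simp only [chain_eq_sum_mul_chain_succ hts, Finset.sum_mul, Finset.mul_sum, mul_assoc]
    exact Finset.sum_comm
  unfold cost
  rw [Finset.sum_eq_sum_Ico_succ_bot htH, hstep H htH,
    Finset.sum_congr rfl fun s hs => hstep s (Finset.mem_Ico.1 hs).1 _]
  simp only [chain_of_le le_rfl, ite_mul, one_mul, zero_mul, Finset.sum_ite_eq', Finset.mem_univ,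
    if_true, mul_add, Finset.sum_add_distrib, Finset.mul_sum]
  rw [Finset.sum_comm (s := Finset.Ico (t + 1) H)]
  ring

theorem cost_sub_cost (x : S) :
    cost q F H ψ ν t x α - cost q F H ψ' ν t x α =
      ∑ y, chain q ν α t x H y * (ψ y (ν H) - ψ' y (ν H)) := by
  simp only [cost, mul_sub, Finset.sum_sub_distrib]
  ring

theorem cost_le_cost_add {c : ℝ} (hq : ∀ s x μ a, IsProb μ → IsProb (q s x μ a))
    (hν : ∀ r, IsProb (ν r)) (hψ : ∀ y, ψ y (ν H) ≤ ψ' y (ν H) + c) (x : S) :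
    cost q F H ψ ν t x α ≤ cost q F H ψ' ν t x α + c := by
  have h := (isProb_chain (α := α) (t := t) hq hν x H).sum_mul_le_sum_mul_add hψ
  unfold cost
  linarith

theorem abs_cost_sub_cost_le {c : ℝ} (hq : ∀ s x μ a, IsProb μ → IsProb (q s x μ a))
    (hν : ∀ r, IsProb (ν r)) (hψ : ∀ y, |ψ y (ν H) - ψ' y (ν H)| ≤ c) (x : S) :
    |cost q F H ψ ν t x α - cost q F H ψ' ν t x α| ≤ c := by
  rw [abs_le]
  constructor
  · linarith [cost_le_cost_add (F := F) (α := α) (t := t) hq hν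
      (fun y => by linarith [abs_le.1 (hψ y)] : ∀ y, ψ' y (ν H) ≤ ψ y (ν H) + c) x]
  · linarith [cost_le_cost_add (F := F) (α := α) (t := t) hq hν
      (fun y => by linarith [abs_le.1 (hψ y)] : ∀ y, ψ y (ν H) ≤ ψ' y (ν H) + c) x]

def IsEpsOptimal (q : ℕ → S → (S → ℝ) → A → S → ℝ) (F : ℕ → S → (S → ℝ) → A → ℝ) (H : ℕ)
    (ψ : S → (S → ℝ) → ℝ) (ν : ℕ → S → ℝ) (t : ℕ) (ε : ℝ) (α : ℕ → S → A) : Prop :=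
  ∀ x γ, cost q F H ψ ν t x α ≤ cost q F H ψ ν t x γ + ε

theorem IsEpsOptimal.mono {ε ε' : ℝ} (h : IsEpsOptimal q F H ψ ν t ε α) (hε : ε ≤ ε') :
    IsEpsOptimal q F H ψ ν t ε' α :=
  fun x γ => (h x γ).trans (by linarith)

theorem exists_isEpsOptimal [Nonempty A] (hq : ∀ s x μ a, IsProb μ → IsProb (q s x μ a))
    (hF : ∀ s x (μ : S → ℝ), BddBelow (Set.range fun a : A => F s x μ a))
    (hν : ∀ r, IsProb (ν r)) (htH : t ≤ H) {η : ℝ} (hη : 0 < η) :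
    ∃ αu, IsEpsOptimal q F H ψ ν t η αu := by
  induction htH using Nat.decreasingInduction generalizing η with
  | self => exact ⟨Classical.arbitrary _, fun x γ => by simp only [cost_self]; linarith⟩
  | of_succ s hsH ih =>
    obtain ⟨αu, hαu⟩ := ih (half_pos hη)
    choose a ha using fun x => exists_forall_le_add_of_bddBelow
      (bddBelow_range_add_sum_mul hq hF (hν s) s x fun y => cost q F H ψ ν (s + 1) y αu)
      (half_pos hη)
    refine ⟨Function.update αu s a, fun x γ => ?_⟩
    have hsucc : ∀ y, cost q F H ψ ν (s + 1) y (Function.update αu s a) =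
        cost q F H ψ ν (s + 1) y αu := fun y =>
      cost_congr y (fun _ _ _ => rfl)
        (fun r hr _ => Function.update_of_ne (by omega) _ _) (fun _ => rfl)
    rw [cost_eq_add_sum_mul_cost_succ x hsH, cost_eq_add_sum_mul_cost_succ x hsH,
      Function.update_self]
    simp only [hsucc]
    have hcont := (hq s x (ν s) (γ s x) (hν s)).sum_mul_le_sum_mul_add fun y => hαu y γ
    linarith [ha x (γ s x)]

theorem value_le_cost [Nonempty A] (hq : ∀ s x μ a, IsProb μ → IsProb (q s x μ a))
    (hF : ∀ s x (μ : S → ℝ), BddBelow (Set.range fun a : A => F s x μ a))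
    (hν : ∀ r, IsProb (ν r)) (htH : t ≤ H) (x : S) (α : ℕ → S → A) :
    value q F H ψ ν t x ≤ cost q F H ψ ν t x α := by
  obtain ⟨αu, hαu⟩ := exists_isEpsOptimal (ψ := ψ) hq hF hν htH one_pos
  refine csInf_le ⟨cost q F H ψ ν t x αu - 1, ?_⟩ ⟨α, rfl⟩
  rintro _ ⟨γ, rfl⟩
  linarith [hαu x γ]

theorem le_value [Nonempty A] {c : ℝ} (x : S) (h : ∀ α, c ≤ cost q F H ψ ν t x α) :
    c ≤ value q F H ψ ν t x :=
  le_csInf ⟨_, Classical.arbitrary _, rfl⟩ (by rintro _ ⟨α, rfl⟩; exact h α)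

theorem isMFEeps_iff [Nonempty A] {ε : ℝ} (hq : ∀ s x μ a, IsProb μ → IsProb (q s x μ a))
    (hF : ∀ s x (μ : S → ℝ), BddBelow (Set.range fun a : A => F s x μ a)) (hμ : IsProb μ)
    (htH : t ≤ H) : isMFEeps q F H ψ ε t μ α ↔ IsEpsOptimal q F H ψ (flow q α t μ) t ε α := by
  refine ⟨fun h x γ => ?_, fun h x => ?_⟩
  · linarith [h x, value_le_cost (ψ := ψ) hq hF (isProb_flow (α := α) (t := t) hq hμ) htH x γ]
  · linarith [le_value (c := cost q F H ψ (flow q α t μ) t x α - ε) x fun γ => by linarith [h x γ]]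

theorem cost_concat (x : S) (htT₀ : t ≤ T₀) (hT₀H : T₀ ≤ H) :
    cost q F H ψ ν t x (concat T₀ γ γ') =
      cost q F T₀ (fun y _ => cost q F H ψ ν T₀ y γ') ν t x γ := by
  induction htT₀ using Nat.decreasingInduction generalizing x with
  | self =>
    rw [cost_self]
    exact cost_congr x (fun _ _ _ => rfl) (fun r hr _ => concat_of_le hr) (fun _ => rfl)
  | of_succ s hsT₀ ih =>
    rw [cost_eq_add_sum_mul_cost_succ x (hsT₀.trans_le hT₀H), cost_eq_add_sum_mul_cost_succ x hsT₀,
      concat_of_lt hsT₀]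
    simp only [ih]

theorem cost_eq_truncated_cost (x : S) (htT₀ : t ≤ T₀) (hT₀H : T₀ ≤ H) :
    cost q F H ψ ν t x α = cost q F T₀ (fun y _ => cost q F H ψ ν T₀ y α) ν t x α := by
  rw [← cost_concat x htT₀ hT₀H, concat_self]

theorem cost_flow_restart (x : S) (htT₀ : t ≤ T₀) (hT₀H : T₀ ≤ H) :
    cost q F H ψ (flow q α T₀ (flow q α t μ T₀)) T₀ x γ = cost q F H ψ (flow q α t μ) T₀ x γ :=
  cost_congr x (fun r hr _ => flow_restart htT₀ (fun _ _ => rfl) hr) (fun _ _ _ => rfl)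
    (fun _ => by rw [flow_restart htT₀ (fun _ _ => rfl) hT₀H])

theorem cost_flow_concat (x : S) (htT₀ : t ≤ T₀) (hT₀H : T₀ ≤ H) :
    cost q F H ψ (flow q (concat T₀ α α') t μ) t x (concat T₀ γ γ') =
      cost q F T₀ (fun y _ => cost q F H ψ (flow q α' T₀ (flow q α t μ T₀)) T₀ y γ')
        (flow q α t μ) t x γ := by
  rw [cost_concat x htT₀ hT₀H]
  refine cost_congr x (fun r _ hr => flow_concat_of_le hr) (fun _ _ _ => rfl) fun y => ?_
  exact cost_congr y (fun r hr _ => flow_concat_of_ge htT₀ hr) (fun _ _ _ => rfl)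
    (fun _ => by rw [flow_concat_of_ge htT₀ hT₀H])

theorem IsEpsOptimal.of_lt [Nonempty A] {cq δ : ℝ} (hq : ∀ s x μ a, IsProb μ → IsProb (q s x μ a))
    (hqlb : ∀ s x μ a y, IsProb μ → cq ≤ q s x μ a y) (hcq : 0 < cq)
    (hF : ∀ s x (μ : S → ℝ), BddBelow (Set.range fun a : A => F s x μ a))
    (hν : ∀ r, IsProb (ν r)) (hα : IsEpsOptimal q F H ψ ν t δ α) (htT₀ : t < T₀)
    (hT₀H : T₀ ≤ H) (hδ : 0 < δ) : IsEpsOptimal q F H ψ ν T₀ (δ + 2 * δ / cq) α := by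
  obtain ⟨αu, hαu⟩ := exists_isEpsOptimal (ψ := ψ) hq hF hν hT₀H hδ
  intro y₀ γ
  let d : S → ℝ := fun y => cost q F H ψ ν T₀ y α - cost q F H ψ ν T₀ y αu
  let p : S → ℝ := chain q ν α t y₀ T₀
  have hgain : ∑ y, p y * d y ≤ δ := by
    have h := cost_sub_cost (q := q) (F := F) (H := T₀) (ν := ν) (t := t) (α := α)
      (ψ := fun y _ => cost q F H ψ ν T₀ y α)
      (ψ' := fun y _ => cost q F H ψ ν T₀ y αu) y₀
    rw [← cost_eq_truncated_cost y₀ htT₀.le hT₀H, ← cost_concat y₀ htT₀.le hT₀H] at h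
    linarith [h, hα y₀ (concat T₀ α αu)]
  have hd₀ : d y₀ ≤ 2 * δ / cq := by
    rw [le_div_iff₀ hcq]
    rcases le_or_gt (d y₀) 0 with hneg | hpos
    · nlinarith
    · calc d y₀ * cq ≤ p y₀ * d y₀ := by
            rw [mul_comm]
            exact mul_le_mul_of_nonneg_right (le_chain_of_lt hq hqlb hν htT₀ y₀ y₀) hpos.le
        _ ≤ ∑ y, p y * d y + δ := (isProb_chain hq hν y₀ T₀).mul_le_sum_mul_add hδ.le
            (fun y => by linarith [hαu y α]) y₀
        _ ≤ 2 * δ := by linarith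
  linarith [hαu y₀ γ]

/-- The `ε`-level of the right-hand side of the dynamic programming principle. -/
def dppSetEps (q : ℕ → S → (S → ℝ) → A → S → ℝ) (F : ℕ → S → (S → ℝ) → A → ℝ)
    (G : S → (S → ℝ) → ℝ) (T T₀ : ℕ) (ε : ℝ) (t : ℕ) (μ : S → ℝ) : Set (S → ℝ) :=
  { φ | ∃ (ψ : S → (S → ℝ) → ℝ) (α : ℕ → S → A),
      (∀ x, |φ x - cost q F T₀ ψ (flow q α t μ) t x α| ≤ ε) ∧
      (fun y => ψ y (flow q α t μ T₀)) ∈ setValueEps q F G T ε T₀ (flow q α t μ T₀) ∧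
      isMFEeps q F T₀ ψ ε t μ α }

theorem mem_dppSetEps_of_mem_setValueEps [Nonempty A] {cq δ ε : ℝ} {G : S → (S → ℝ) → ℝ}
    {T : ℕ} {φ : S → ℝ} (hq : ∀ s x μ a, IsProb μ → IsProb (q s x μ a))
    (hqlb : ∀ s x μ a y, IsProb μ → cq ≤ q s x μ a y) (hcq : 0 < cq)
    (hF : ∀ s x (μ : S → ℝ), BddBelow (Set.range fun a : A => F s x μ a))
    (htT₀ : t < T₀) (hT₀T : T₀ ≤ T) (hμ : IsProb μ) (hδ : 0 < δ) (hδε : δ + 2 * δ / cq ≤ ε)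
    (hφ : φ ∈ setValueEps q F G T δ t μ) : φ ∈ dppSetEps q F G T T₀ ε t μ := by
  obtain ⟨α, hMFE, hclose⟩ := hφ
  have hν : ∀ r, IsProb (flow q α t μ r) := isProb_flow hq hμ
  have hopt := (isMFEeps_iff hq hF hμ (htT₀.le.trans hT₀T)).1 hMFE
  have hδε' : δ ≤ ε := by linarith [show 0 ≤ 2 * δ / cq by positivity]
  refine ⟨fun y _ => cost q F T G (flow q α t μ) T₀ y α, α, fun x => ?_, ⟨α, ?_, fun y => ?_⟩, ?_⟩
  · rw [← cost_eq_truncated_cost x htT₀.le hT₀T]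
    exact (hclose x).trans hδε'
  · rw [isMFEeps_iff hq hF (hν T₀) hT₀T]
    intro y γ
    simp only [cost_flow_restart y htT₀.le hT₀T]
    exact (hopt.of_lt hq hqlb hcq hF hν htT₀ hT₀T hδ).mono hδε y γ
  · rw [cost_flow_restart y htT₀.le hT₀T, sub_self, abs_zero]
    linarith
  · rw [isMFEeps_iff hq hF hμ htT₀.le]
    intro x γ
    rw [← cost_eq_truncated_cost x htT₀.le hT₀T, ← cost_concat x htT₀.le hT₀T]
    exact (hopt x _).trans (by linarith)

theorem mem_setValueEps_of_mem_dppSetEps [Nonempty A] {ε : ℝ} {G : S → (S → ℝ) → ℝ}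
    {T : ℕ} {φ : S → ℝ} (hq : ∀ s x μ a, IsProb μ → IsProb (q s x μ a))
    (hF : ∀ s x (μ : S → ℝ), BddBelow (Set.range fun a : A => F s x μ a))
    (htT₀ : t ≤ T₀) (hT₀T : T₀ ≤ T) (hμ : IsProb μ) (hφ : φ ∈ dppSetEps q F G T T₀ ε t μ) :
    φ ∈ setValueEps q F G T (4 * ε) t μ := by
  obtain ⟨ψ, α, hclose, ⟨α', hMFE', hψ⟩, hMFE⟩ := hφ
  have hν : ∀ r, IsProb (flow q α t μ r) := isProb_flow hq hμ
  have hopt := (isMFEeps_iff hq hF hμ htT₀).1 hMFE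
  have hopt' := (isMFEeps_iff hq hF (hν T₀) hT₀T).1 hMFE'
  have hglued : ∀ x, |cost q F T G (flow q (concat T₀ α α') t μ) t x (concat T₀ α α') -
      cost q F T₀ ψ (flow q α t μ) t x α| ≤ ε := by
    intro x
    rw [cost_flow_concat x htT₀ hT₀T, abs_sub_comm]
    exact abs_cost_sub_cost_le hq hν hψ x
  have hdeviation : ∀ x γ, cost q F T₀ ψ (flow q α t μ) t x γ ≤
      cost q F T G (flow q (concat T₀ α α') t μ) t x γ + 2 * ε := by
    intro x γ
    conv_rhs => rw [← concat_self T₀ γ, cost_flow_concat x htT₀ hT₀T]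
    exact cost_le_cost_add hq hν (fun y => by linarith [abs_le.1 (hψ y), hopt' y γ]) x
  refine ⟨concat T₀ α α', (isMFEeps_iff hq hF hμ (htT₀.trans hT₀T)).2 fun x γ => ?_, fun x => ?_⟩
  · linarith [abs_le.1 (hglued x), hopt x γ, hdeviation x γ]
  · rw [abs_le]
    constructor <;> linarith [abs_le.1 (hglued x), abs_le.1 (hclose x)]

end MFGSetValue

theorem set_value_DPP_general
    {S A : Type*} [Fintype S] [DecidableEq S] [Nonempty A]
    (T : ℕ) (q : ℕ → S → (S → ℝ) → A → S → ℝ)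
    (F : ℕ → S → (S → ℝ) → A → ℝ) (G : S → (S → ℝ) → ℝ)
    (cq : ℝ) (hcq : 0 < cq)
    (hqlb : ∀ s x μ a y, IsProb μ → cq ≤ q s x μ a y)
    (hqsum : ∀ s x μ a, IsProb μ → ∑ y, q s x μ a y = 1)
    (hF : ∀ s x (μ : S → ℝ), BddBelow (Set.range fun a : A => F s x μ a))
    (t T₀ : ℕ) (htT₀ : t < T₀) (hT₀T : T₀ ≤ T)
    (μ : S → ℝ) (hμ : IsProb μ) :
    setValue q F G T t μ =
      ⋂ (ε : ℝ) (_ : 0 < ε),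
        { φ | ∃ (ψ : S → (S → ℝ) → ℝ) (α : ℕ → S → A),
            (∀ x, |φ x - cost q F T₀ ψ (flow q α t μ) t x α| ≤ ε) ∧
            (fun y => ψ y (flow q α t μ T₀)) ∈ setValueEps q F G T ε T₀ (flow q α t μ T₀) ∧
            isMFEeps q F T₀ ψ ε t μ α } := by
  have hq : ∀ s x μ a, IsProb μ → IsProb (q s x μ a) := fun s x μ a hμ =>
    ⟨fun y => hcq.le.trans (hqlb s x μ a y hμ), hqsum s x μ a hμ⟩
  ext φ
  simp only [setValue, Set.mem_iInter]
  refine ⟨fun hφ ε hε => ?_, fun hφ ε hε => ?_⟩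
  · have hδε : ε * cq / (cq + 2) + 2 * (ε * cq / (cq + 2)) / cq = ε := by
      field_simp
    exact mem_dppSetEps_of_mem_setValueEps hq hqlb hcq hF htT₀ hT₀T hμ (by positivity) hδε.le
      (hφ _ (by positivity))
  · simpa only [mul_div_cancel₀ ε four_ne_zero] using
      mem_setValueEps_of_mem_dppSetEps hq hF htT₀.le hT₀T hμ (hφ (ε / 4) (by positivity))

/-- Theorem 2.8, DPP for the set value.  Assume `q ≥ c_q > 0`.  For
`0 ≤ t < T₀ ≤ T` and `μ ∈ 𝒫₀(𝕊)`,
`𝕍_state(t,μ) = ⋂_{ε>0} { φ : ‖φ − J(T₀,ψ;t,μ,α*;·,α*)‖_∞ ≤ ε` for some `ψ, α*` with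
`ψ(·,μ^{α*}_{T₀}) ∈ 𝕍^ε_state(T₀,μ^{α*}_{T₀})` and `α* ∈ ℳ^ε_state(T₀,ψ;t,μ) }`. -/
theorem set_value_DPP
    {S A : Type*} [Fintype S] [DecidableEq S] [Nonempty A]
    (T : ℕ) (q : ℕ → S → (S → ℝ) → A → S → ℝ)
    (F : ℕ → S → (S → ℝ) → A → ℝ) (G : S → (S → ℝ) → ℝ)
    (cq : ℝ) (hcq : 0 < cq)
    (hqlb : ∀ s x μ a y, IsProb μ → cq ≤ q s x μ a y)
    (hq1 : ∀ s x μ a y, IsProb μ → q s x μ a y < 1)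
    (hqsum : ∀ s x μ a, IsProb μ → ∑ y, q s x μ a y = 1)
    (hF : ∀ s x (μ : S → ℝ), BddBelow (Set.range fun a : A => F s x μ a))
    (t T₀ : ℕ) (htT₀ : t < T₀) (hT₀T : T₀ ≤ T)
    (μ : S → ℝ) (hμ : IsProb μ) (hμfull : ∀ x, 0 < μ x) :
    setValue q F G T t μ =
      ⋂ (ε : ℝ) (_ : 0 < ε),
        { φ | ∃ (ψ : S → (S → ℝ) → ℝ) (α : ℕ → S → A),
            (∀ x, |φ x - cost q F T₀ ψ (flow q α t μ) t x α| ≤ ε) ∧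
            (fun y => ψ y (flow q α t μ T₀)) ∈ setValueEps q F G T ε T₀ (flow q α t μ T₀) ∧
            isMFEeps q F T₀ ψ ε t μ α } :=
  set_value_DPP_general T q F G cq hcq hqlb hqsum hF t T₀ htT₀ hT₀T μ hμ
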